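/- arXiv:1702.05469 — 3 statements merged into one kernel-verified Lean document; each statement's English description precedes it below -/
import Mathlib

section
/- Let n ≥ 1 be a natural number, E a finite-dimensional real normed vector space, H : ℝ → ℝ a differentiable function with n·H(s) > 2 for all s, and T, N, y : ℝ → E differentiable functions satisfying, for all s: T'(s) = −(n H(s)/2)·N(s) + y(s), N'(s) = (n H(s)/2)·T(s), and y'(s) = T(s). Define κ(s) = (1/2)√(n²H(s)² − 4), τ(s) = 2 n H'(s)/(n²H(s)² − 4), 𝐧(s) = −(n H(s)/√(n²H(s)² − 4))·N(s) + (2/√(n²H(s)² − 4))·y(s), and 𝐛(s) = (2/√(n²H(s)² − 4))·N(s) − (n H(s)/√(n²H(s)² − 4))·y(s). Then for all s: T'(s) = κ(s)·𝐧(s), 𝐧'(s) = −κ(s)·T(s) + τ(s)·𝐛(s), and 𝐛'(s) = τ(s)·𝐧(s). -/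
/-!
Write `m = nH` and `S = √(m² - 4)`. The frame coefficients `a = m / S` and `b = 2 / S` satisfy
`a² - b² = 1`, `a' = -τ b` and `b' = -τ a` with `τ = 2m' / S²`, so `(𝐧, -𝐛)` is the hyperbolic
rotation of `(-N, y)` by an angle turning at rate `-τ`. Combined with `N' = (m/2) T` and `y' = T`,
the product rule yields the Frenet equations with `κ = S / 2`.
-/

open Real

section
variable {m : ℝ → ℝ} {m' s : ℝ}

lemma hasDerivAt_sqrt_sq_sub_four (hm : HasDerivAt m m' s) (hs : 4 < m s ^ 2) :
    HasDerivAt (fun x => √(m x ^ 2 - 4)) (m s * m' / √(m s ^ 2 - 4)) s := by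
  refine ((hm.fun_pow 2).sub_const 4).sqrt (by linarith) |>.congr_deriv ?_
  field_simp
  ring

lemma hasDerivAt_div_sqrt_sq_sub_four (hm : HasDerivAt m m' s) (hs : 4 < m s ^ 2) :
    HasDerivAt (fun x => m x / √(m x ^ 2 - 4))
      (-(2 * m' / (m s ^ 2 - 4)) * (2 / √(m s ^ 2 - 4))) s := by
  have hD : 0 < m s ^ 2 - 4 := by linarith
  have hS : 0 < √(m s ^ 2 - 4) := sqrt_pos.mpr hD
  have hS2 : √(m s ^ 2 - 4) ^ 2 = m s ^ 2 - 4 := sq_sqrt hD.le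
  refine (hm.fun_div (hasDerivAt_sqrt_sq_sub_four hm hs) hS.ne').congr_deriv ?_
  rw [hS2]
  field_simp
  linear_combination m' * hS2

lemma hasDerivAt_two_div_sqrt_sq_sub_four (hm : HasDerivAt m m' s) (hs : 4 < m s ^ 2) :
    HasDerivAt (fun x => 2 / √(m x ^ 2 - 4))
      (-(2 * m' / (m s ^ 2 - 4)) * (m s / √(m s ^ 2 - 4))) s := by
  have hD : 0 < m s ^ 2 - 4 := by linarith
  have hS : 0 < √(m s ^ 2 - 4) := sqrt_pos.mpr hD
  have hS2 : √(m s ^ 2 - 4) ^ 2 = m s ^ 2 - 4 := sq_sqrt hD.le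
  refine ((hasDerivAt_const s (2 : ℝ)).fun_div (hasDerivAt_sqrt_sq_sub_four hm hs)
    hS.ne').congr_deriv ?_
  rw [hS2]
  field_simp
  ring

variable {E : Type*} [NormedAddCommGroup E] [NormedSpace ℝ E] {T N y : ℝ → E}

noncomputable def frenetNormal (m : ℝ → ℝ) (N y : ℝ → E) (x : ℝ) : E :=
  (-(m x / √(m x ^ 2 - 4))) • N x + (2 / √(m x ^ 2 - 4)) • y x

noncomputable def frenetBinormal (m : ℝ → ℝ) (N y : ℝ → E) (x : ℝ) : E :=
  (2 / √(m x ^ 2 - 4)) • N x - (m x / √(m x ^ 2 - 4)) • y x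

lemma sqrt_sq_sub_four_div_two_smul_frenetNormal (hs : 4 < m s ^ 2) :
    (√(m s ^ 2 - 4) / 2) • frenetNormal m N y s = (-(m s / 2)) • N s + y s := by
  have hS : 0 < √(m s ^ 2 - 4) := sqrt_pos.mpr (by linarith)
  unfold frenetNormal
  match_scalars <;> field_simp

lemma hasDerivAt_frenetNormal (hm : HasDerivAt m m' s) (hs : 4 < m s ^ 2)
    (hN : HasDerivAt N ((m s / 2) • T s) s) (hy : HasDerivAt y (T s) s) :
    HasDerivAt (frenetNormal m N y)
      ((-(√(m s ^ 2 - 4) / 2)) • T s + (2 * m' / (m s ^ 2 - 4)) • frenetBinormal m N y s) s := by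
  have hD : 0 < m s ^ 2 - 4 := by linarith
  have hS : 0 < √(m s ^ 2 - 4) := sqrt_pos.mpr hD
  have hS2 : √(m s ^ 2 - 4) ^ 2 = m s ^ 2 - 4 := sq_sqrt hD.le
  refine (((hasDerivAt_div_sqrt_sq_sub_four hm hs).fun_neg.smul hN).add
    ((hasDerivAt_two_div_sqrt_sq_sub_four hm hs).smul hy)).congr_deriv ?_
  unfold frenetBinormal
  match_scalars <;> field_simp
  linear_combination hS2

lemma hasDerivAt_frenetBinormal (hm : HasDerivAt m m' s) (hs : 4 < m s ^ 2)
    (hN : HasDerivAt N ((m s / 2) • T s) s) (hy : HasDerivAt y (T s) s) :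
    HasDerivAt (frenetBinormal m N y) ((2 * m' / (m s ^ 2 - 4)) • frenetNormal m N y s) s := by
  have hS : 0 < √(m s ^ 2 - 4) := sqrt_pos.mpr (by linarith)
  refine (((hasDerivAt_two_div_sqrt_sq_sub_four hm hs).smul hN).sub
    ((hasDerivAt_div_sqrt_sq_sub_four hm hs).smul hy)).congr_deriv ?_
  unfold frenetNormal
  match_scalars <;> field_simp
  ring

end

theorem stmt_4_general (n : ℕ) (E : Type*) [NormedAddCommGroup E]
    [NormedSpace ℝ E]
    (H : ℝ → ℝ) (hH : Differentiable ℝ H) (hH2 : ∀ s : ℝ, (n : ℝ) * H s > 2)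
    (T N y : ℝ → E) (hN : Differentiable ℝ N)
    (hy : Differentiable ℝ y)
    (hT' : ∀ s : ℝ, deriv T s = (-((n : ℝ) * H s / 2)) • N s + y s)
    (hN' : ∀ s : ℝ, deriv N s = ((n : ℝ) * H s / 2) • T s)
    (hy' : ∀ s : ℝ, deriv y s = T s)
    (κ τ : ℝ → ℝ) (Fn Fb : ℝ → E)
    (hκ : ∀ s : ℝ, κ s = (1 / 2) * Real.sqrt ((n : ℝ) ^ 2 * H s ^ 2 - 4))
    (hτ : ∀ s : ℝ, τ s = 2 * (n : ℝ) * deriv H s / ((n : ℝ) ^ 2 * H s ^ 2 - 4))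
    (hFn : ∀ s : ℝ, Fn s =
      (-((n : ℝ) * H s / Real.sqrt ((n : ℝ) ^ 2 * H s ^ 2 - 4))) • N s
        + (2 / Real.sqrt ((n : ℝ) ^ 2 * H s ^ 2 - 4)) • y s)
    (hFb : ∀ s : ℝ, Fb s =
      (2 / Real.sqrt ((n : ℝ) ^ 2 * H s ^ 2 - 4)) • N s
        - ((n : ℝ) * H s / Real.sqrt ((n : ℝ) ^ 2 * H s ^ 2 - 4)) • y s) :
    ∀ s : ℝ, deriv T s = κ s • Fn s ∧
      deriv Fn s = (-(κ s)) • T s + τ s • Fb s ∧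
      deriv Fb s = τ s • Fn s := by
  intro s
  simp only [← mul_pow] at hκ hτ hFn hFb
  obtain rfl : Fn = frenetNormal (fun x => n * H x) N y := funext hFn
  obtain rfl : Fb = frenetBinormal (fun x => n * H x) N y := funext hFb
  have hm : HasDerivAt (fun x => (n : ℝ) * H x) (n * deriv H s) s :=
    (hH s).hasDerivAt.const_mul _
  have hs : 4 < ((n : ℝ) * H s) ^ 2 := by nlinarith [hH2 s]
  have hNs : HasDerivAt N ((n * H s / 2) • T s) s := hN' s ▸ (hN s).hasDerivAt
  have hys : HasDerivAt y (T s) s := hy' s ▸ (hy s).hasDerivAt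
  have hκs : κ s = √((n * H s) ^ 2 - 4) / 2 := by rw [hκ]; ring
  have hτs : τ s = 2 * (n * deriv H s) / ((n * H s) ^ 2 - 4) := by rw [hτ, mul_assoc]
  rw [hκs, hτs, hT']
  exact ⟨(sqrt_sq_sub_four_div_two_smul_frenetNormal (m := fun x => n * H x) hs).symm,
    (hasDerivAt_frenetNormal hm hs hNs hys).deriv,
    (hasDerivAt_frenetBinormal hm hs hNs hys).deriv⟩

/-- Frenet–Serret computation for an integral curve of `e₁ = ∇H/|∇H|` on a
biconservative hypersurface of hyperbolic space `Hⁿ⁺¹`, in the case `nH > 2`. -/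
theorem stmt_4 (n : ℕ) (hn : 1 ≤ n) (E : Type*) [NormedAddCommGroup E]
    [NormedSpace ℝ E] [FiniteDimensional ℝ E]
    (H : ℝ → ℝ) (hH : Differentiable ℝ H) (hH2 : ∀ s : ℝ, (n : ℝ) * H s > 2)
    (T N y : ℝ → E) (hT : Differentiable ℝ T) (hN : Differentiable ℝ N)
    (hy : Differentiable ℝ y)
    (hT' : ∀ s : ℝ, deriv T s = (-((n : ℝ) * H s / 2)) • N s + y s)
    (hN' : ∀ s : ℝ, deriv N s = ((n : ℝ) * H s / 2) • T s)
    (hy' : ∀ s : ℝ, deriv y s = T s)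
    (κ τ : ℝ → ℝ) (Fn Fb : ℝ → E)
    (hκ : ∀ s : ℝ, κ s = (1 / 2) * Real.sqrt ((n : ℝ) ^ 2 * H s ^ 2 - 4))
    (hτ : ∀ s : ℝ, τ s = 2 * (n : ℝ) * deriv H s / ((n : ℝ) ^ 2 * H s ^ 2 - 4))
    (hFn : ∀ s : ℝ, Fn s =
      (-((n : ℝ) * H s / Real.sqrt ((n : ℝ) ^ 2 * H s ^ 2 - 4))) • N s
        + (2 / Real.sqrt ((n : ℝ) ^ 2 * H s ^ 2 - 4)) • y s)
    (hFb : ∀ s : ℝ, Fb s =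
      (2 / Real.sqrt ((n : ℝ) ^ 2 * H s ^ 2 - 4)) • N s
        - ((n : ℝ) * H s / Real.sqrt ((n : ℝ) ^ 2 * H s ^ 2 - 4)) • y s) :
    ∀ s : ℝ, deriv T s = κ s • Fn s ∧
      deriv Fn s = (-(κ s)) • T s + τ s • Fb s ∧
      deriv Fb s = τ s • Fn s :=
  stmt_4_general n E H hH hH2 T N y hN hy hT' hN' hy' κ τ Fn Fb hκ hτ hFn hFb
end

section
/- Let ⟨x,y⟩₁ = −x₀y₀ + x₁y₁ + x₂y₂ + x₃y₃ + x₄y₄ denote the Lorentzian bilinear form on ℝ⁵. Let a, b be nonzero real numbers and c a real number with 1/a² − c² − 1/b² = 1, and define Θ(t,u) = (cosh(a u)/a, sinh(a u)/a, cos(b t)/b, sin(b t)/b, c). Then for all (t,u): ⟨Θ, Θ⟩₁ = −1 (so Θ takes values in H⁴ = {x ∈ ℝ⁵ : ⟨x,x⟩₁ = −1}), and ⟨∂ₜΘ, ∂ₜΘ⟩₁ = 1, ⟨∂ᵤΘ, ∂ᵤΘ⟩₁ = 1, ⟨∂ₜΘ, ∂ᵤΘ⟩₁ = 0. -/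
/-- The Lorentzian bilinear form on `ℝ⁵` with timelike coordinate `x₀`. -/
def lor5 (x y : Fin 5 → ℝ) : ℝ :=
  -(x 0 * y 0) + x 1 * y 1 + x 2 * y 2 + x 3 * y 3 + x 4 * y 4

open Real

lemma lor5_vecCons (x₀ x₁ x₂ x₃ x₄ y₀ y₁ y₂ y₃ y₄ : ℝ) :
    lor5 ![x₀, x₁, x₂, x₃, x₄] ![y₀, y₁, y₂, y₃, y₄] =
      -(x₀ * y₀) + x₁ * y₁ + x₂ * y₂ + x₃ * y₃ + x₄ * y₄ :=
  rfl

lemma HasDerivAt.comp_const_mul_div {𝕜 : Type*} [NontriviallyNormedField 𝕜] {f : 𝕜 → 𝕜}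
    {f' k x : 𝕜} (hk : k ≠ 0) (hf : HasDerivAt f f' (k * x)) :
    HasDerivAt (fun x => f (k * x) / k) f' x := by
  have h := (hf.comp x ((hasDerivAt_id x).const_mul k)).div_const k
  simp only [Function.comp_def, mul_one] at h
  exact h.congr_deriv (by field_simp)

lemma HasDerivAt.vecCons₅ {𝕜 F : Type*} [NontriviallyNormedField 𝕜] [NormedAddCommGroup F]
    [NormedSpace 𝕜 F] {f₀ f₁ f₂ f₃ f₄ : 𝕜 → F} {f₀' f₁' f₂' f₃' f₄' : F} {x : 𝕜}
    (h₀ : HasDerivAt f₀ f₀' x) (h₁ : HasDerivAt f₁ f₁' x) (h₂ : HasDerivAt f₂ f₂' x)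
    (h₃ : HasDerivAt f₃ f₃' x) (h₄ : HasDerivAt f₄ f₄' x) :
    HasDerivAt (fun x => ![f₀ x, f₁ x, f₂ x, f₃ x, f₄ x]) ![f₀', f₁', f₂', f₃', f₄'] x := by
  have hnil : HasDerivAt (fun _ : 𝕜 => (![] : Fin 0 → F)) ![] x :=
    (hasDerivAt_const x _).congr_deriv (Subsingleton.elim _ _)
  exact h₀.finCons (h₁.finCons (h₂.finCons (h₃.finCons (h₄.finCons hnil))))

/-- Case (2) of Proposition 4.3: the product of a hyperbola and a circle is a
unit-speed orthogonal parametrization lying in `H⁴ ⊂ ℝ⁵₁`. -/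
theorem stmt_8 (a b c : ℝ) (ha : a ≠ 0) (hb : b ≠ 0)
    (hc : 1 / a ^ 2 - c ^ 2 - 1 / b ^ 2 = 1)
    (Θ : ℝ → ℝ → Fin 5 → ℝ)
    (hΘ : ∀ t u : ℝ, Θ t u =
      ![Real.cosh (a * u) / a, Real.sinh (a * u) / a,
        Real.cos (b * t) / b, Real.sin (b * t) / b, c]) :
    ∀ t u : ℝ,
      lor5 (Θ t u) (Θ t u) = -1 ∧
      lor5 (deriv (fun t' => Θ t' u) t) (deriv (fun t' => Θ t' u) t) = 1 ∧
      lor5 (deriv (fun u' => Θ t u') u) (deriv (fun u' => Θ t u') u) = 1 ∧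
      lor5 (deriv (fun t' => Θ t' u) t) (deriv (fun u' => Θ t u') u) = 0 := by
  intro t u
  have hΘt : deriv (fun t' => Θ t' u) t = ![0, 0, -sin (b * t), cos (b * t), 0] := by
    simp_rw [hΘ]
    exact (HasDerivAt.vecCons₅ (hasDerivAt_const _ _) (hasDerivAt_const _ _)
      ((hasDerivAt_cos _).comp_const_mul_div hb) ((hasDerivAt_sin _).comp_const_mul_div hb)
      (hasDerivAt_const _ _)).deriv
  have hΘu : deriv (fun u' => Θ t u') u = ![sinh (a * u), cosh (a * u), 0, 0, 0] := by
    simp_rw [hΘ]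
    exact (HasDerivAt.vecCons₅ ((hasDerivAt_cosh _).comp_const_mul_div ha)
      ((hasDerivAt_sinh _).comp_const_mul_div ha) (hasDerivAt_const _ _)
      (hasDerivAt_const _ _) (hasDerivAt_const _ _)).deriv
  have hcircle := sin_sq_add_cos_sq (b * t)
  have hhyperbola := cosh_sq_sub_sinh_sq (a * u)
  rw [hΘt, hΘu, hΘ, lor5_vecCons, lor5_vecCons, lor5_vecCons, lor5_vecCons]
  refine ⟨?_, by linear_combination hcircle, by linear_combination hhyperbola, by ring⟩
  field_simp at hc ⊢
  linear_combination a ^ 2 * hcircle - b ^ 2 * hhyperbola - hc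
end

section
/- Let ⟨x,y⟩₁ = −x₀y₀ + x₁y₁ + x₂y₂ + x₃y₃ + x₄y₄ denote the Lorentzian bilinear form on ℝ⁵. Let a, b be nonzero real numbers and define Θ(t,u) = (a u² + a/b² + a + 1/(4a), u, cos(t)/b, sin(t)/b, a u² + a/b² + a − 1/(4a)). Then for all (t,u): ⟨Θ, Θ⟩₁ = −1 (so Θ takes values in H⁴ = {x ∈ ℝ⁵ : ⟨x,x⟩₁ = −1}), and ⟨∂ᵤΘ, ∂ᵤΘ⟩₁ = 1, ⟨∂ₜΘ, ∂ₜΘ⟩₁ = 1/b², ⟨∂ₜΘ, ∂ᵤΘ⟩₁ = 0. -/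
theorem HasDerivAt.vecCons {n : ℕ} {f : ℝ → ℝ} {g : ℝ → Fin n → ℝ} {f' : ℝ} {g' : Fin n → ℝ}
    {x : ℝ} (hf : HasDerivAt f f' x) (hg : HasDerivAt g g' x) :
    HasDerivAt (fun y => Matrix.vecCons (f y) (g y)) (Matrix.vecCons f' g') x :=
  hasDerivAt_pi.2 <| Fin.cases (by simpa) fun i => by simpa using hasDerivAt_pi.1 hg i

theorem hasDerivAt_vecEmpty (x : ℝ) : HasDerivAt (fun _ : ℝ => (![] : Fin 0 → ℝ)) ![] x :=
  (hasDerivAt_const x _).congr_deriv (Subsingleton.elim _ _)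

theorem lor5_self_add_sub (A c u x y : ℝ) :
    lor5 ![A + c, u, x, y, A - c] ![A + c, u, x, y, A - c] =
      -(4 * A * c) + u ^ 2 + x ^ 2 + y ^ 2 := by
  simp only [lor5, Matrix.cons_val]
  ring

section Surface

variable (a b : ℝ)

noncomputable def surface (t u : ℝ) : Fin 5 → ℝ :=
  ![a * u ^ 2 + a / b ^ 2 + a + 1 / (4 * a), u, Real.cos t / b, Real.sin t / b,
    a * u ^ 2 + a / b ^ 2 + a - 1 / (4 * a)]

theorem lor5_surface_self (ha : a ≠ 0) (t u : ℝ) :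
    lor5 (surface a b t u) (surface a b t u) = -1 := by
  rw [surface, lor5_self_add_sub]
  have hc : 4 * (a * u ^ 2 + a / b ^ 2 + a) * (1 / (4 * a)) = u ^ 2 + 1 / b ^ 2 + 1 := by
    field_simp
  rw [hc]
  linear_combination (1 / b ^ 2) * Real.sin_sq_add_cos_sq t

theorem hasDerivAt_surface_right (t u : ℝ) :
    HasDerivAt (surface a b t) ![2 * a * u, 1, 0, 0, 2 * a * u] u := by
  have hA : HasDerivAt (fun u => a * u ^ 2 + a / b ^ 2 + a) (2 * a * u) u :=
    ((((hasDerivAt_pow 2 u).const_mul a).add_const _).add_const _).congr_deriv (by ring)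
  exact (hA.add_const _).vecCons <| (hasDerivAt_id u).vecCons <| (hasDerivAt_const _ _).vecCons <|
    (hasDerivAt_const _ _).vecCons <| (hA.sub_const _).vecCons <| hasDerivAt_vecEmpty u

theorem hasDerivAt_surface_left (t u : ℝ) :
    HasDerivAt (fun t => surface a b t u) ![0, 0, -Real.sin t / b, Real.cos t / b, 0] t :=
  (hasDerivAt_const _ _).vecCons <| (hasDerivAt_const _ _).vecCons <|
    ((Real.hasDerivAt_cos t).div_const b).vecCons <|
    ((Real.hasDerivAt_sin t).div_const b).vecCons <| (hasDerivAt_const _ _).vecCons <|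
    hasDerivAt_vecEmpty t

end Surface

theorem stmt_9_general (a b : ℝ) (ha : a ≠ 0)
    (Θ : ℝ → ℝ → Fin 5 → ℝ)
    (hΘ : ∀ t u : ℝ, Θ t u =
      ![a * u ^ 2 + a / b ^ 2 + a + 1 / (4 * a), u,
        Real.cos t / b, Real.sin t / b,
        a * u ^ 2 + a / b ^ 2 + a - 1 / (4 * a)]) :
    ∀ t u : ℝ,
      lor5 (Θ t u) (Θ t u) = -1 ∧
      lor5 (deriv (fun u' => Θ t u') u) (deriv (fun u' => Θ t u') u) = 1 ∧
      lor5 (deriv (fun t' => Θ t' u) t) (deriv (fun t' => Θ t' u) t) = 1 / b ^ 2 ∧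
      lor5 (deriv (fun t' => Θ t' u) t) (deriv (fun u' => Θ t u') u) = 0 := by
  obtain rfl : Θ = surface a b := funext₂ hΘ
  intro t u
  rw [(hasDerivAt_surface_right a b t u).deriv, (hasDerivAt_surface_left a b t u).deriv]
  refine ⟨lor5_surface_self a b ha t u, ?_, ?_, ?_⟩ <;> simp only [lor5, Matrix.cons_val]
  · ring
  · linear_combination (1 / b ^ 2) * Real.sin_sq_add_cos_sq t
  · ring

/-- Case (3) of Proposition 4.3: the lightlike-parabola/circle surface lies in
`H⁴ ⊂ ℝ⁵₁` and has orthogonal coordinate vector fields. -/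
theorem stmt_9 (a b : ℝ) (ha : a ≠ 0) (hb : b ≠ 0)
    (Θ : ℝ → ℝ → Fin 5 → ℝ)
    (hΘ : ∀ t u : ℝ, Θ t u =
      ![a * u ^ 2 + a / b ^ 2 + a + 1 / (4 * a), u,
        Real.cos t / b, Real.sin t / b,
        a * u ^ 2 + a / b ^ 2 + a - 1 / (4 * a)]) :
    ∀ t u : ℝ,
      lor5 (Θ t u) (Θ t u) = -1 ∧
      lor5 (deriv (fun u' => Θ t u') u) (deriv (fun u' => Θ t u') u) = 1 ∧
      lor5 (deriv (fun t' => Θ t' u) t) (deriv (fun t' => Θ t' u) t) = 1 / b ^ 2 ∧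
      lor5 (deriv (fun t' => Θ t' u) t) (deriv (fun u' => Θ t u') u) = 0 :=
  stmt_9_general a b ha Θ hΘ
end
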